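/- Let R ≥ 1, let D ∈ ℂ^{R×R} be Hermitian positive definite, let A ∈ ℂ^{R×R} be Hermitian, and let c > 0. If λ_max(D^{-1/2} A D^{-1/2}) > 0, then inf { w^H D w : w ∈ ℂ^R, w^H A w ≥ c } = c / λ_max(D^{-1/2} A D^{-1/2}), and the infimum is attained. -/

import Mathlib

/-!
Substituting `w = D^{-1/2} u` turns the problem into minimizing `‖u‖²` subject to
`u^H M u ≥ c` with `M = D^{-1/2} A D^{-1/2}`. The Rayleigh bound `u^H M u ≤ λ_max(M) ‖u‖²`
gives `‖u‖² ≥ c / λ_max(M)`, and a suitably scaled top eigenvector of `M` attains it.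
-/

open Matrix Finset
open scoped ComplexOrder MatrixOrder

/-- The positive semidefinite square root of a positive semidefinite matrix, with the
definition `Matrix.PosSemidef.sqrt` had in Mathlib of December 2024 (since removed). -/
noncomputable def Matrix.PosSemidef.sqrt {n 𝕜 : Type*} [Fintype n] [DecidableEq n] [RCLike 𝕜]
    {A : Matrix n n 𝕜} (hA : A.PosSemidef) : Matrix n n 𝕜 :=
  hA.1.eigenvectorUnitary.1 * diagonal ((↑) ∘ (√·) ∘ hA.1.eigenvalues) *
    (star hA.1.eigenvectorUnitary : Matrix n n 𝕜)

/-- The largest real eigenvalue of a complex matrix (for Hermitian matrices this is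
the largest eigenvalue `λ_max`). -/
noncomputable def lambdaMax {R : ℕ} (A : Matrix (Fin R) (Fin R) ℂ) : ℝ :=
  sSup {x : ℝ | ∃ v : Fin R → ℂ, v ≠ 0 ∧ A.mulVec v = (x : ℂ) • v}

variable {n 𝕜 : Type*} [Fintype n] [RCLike 𝕜]

def constrainedValues (A D : Matrix n n 𝕜) (c : ℝ) : Set ℝ :=
  {x | ∃ w : n → 𝕜, c ≤ RCLike.re (star w ⬝ᵥ A *ᵥ w) ∧ x = RCLike.re (star w ⬝ᵥ D *ᵥ w)}

theorem dotProduct_conjTranspose_mul_mul_mulVec (T A : Matrix n n 𝕜) (w : n → 𝕜) :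
    star w ⬝ᵥ (Tᴴ * A * T) *ᵥ w = star (T *ᵥ w) ⬝ᵥ A *ᵥ T *ᵥ w := by
  simp only [← mulVec_mulVec, dotProduct_mulVec _ Tᴴ, star_mulVec]

theorem re_dotProduct_mulVec_real_smul (B : Matrix n n 𝕜) (t : ℝ) (w : n → 𝕜) :
    RCLike.re (star (t • w) ⬝ᵥ B *ᵥ (t • w)) = t ^ 2 * RCLike.re (star w ⬝ᵥ B *ᵥ w) := by
  rw [star_smul, mulVec_smul, smul_dotProduct, dotProduct_smul, RCLike.smul_re, RCLike.smul_re,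
    star_trivial]
  ring

variable [DecidableEq n]

theorem Matrix.PosSemidef.sqrt_eq_cfcSqrt {A : Matrix n n 𝕜} (hA : A.PosSemidef) :
    hA.sqrt = CFC.sqrt A := by
  rw [CFC.sqrt_eq_real_sqrt A hA.nonneg, cfcₙ_eq_cfc, hA.1.cfc_eq]
  rfl

theorem Matrix.PosSemidef.isHermitian_sqrt {A : Matrix n n 𝕜} (hA : A.PosSemidef) :
    hA.sqrt.IsHermitian := by
  rw [hA.sqrt_eq_cfcSqrt]
  exact (CFC.sqrt_nonneg A).posSemidef.isHermitian

theorem Matrix.PosDef.isUnit_sqrt {D : Matrix n n 𝕜} (hD : D.PosDef) :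
    IsUnit hD.posSemidef.sqrt := by
  rw [hD.posSemidef.sqrt_eq_cfcSqrt, CFC.isUnit_sqrt_iff D hD.posSemidef.nonneg]
  exact hD.isUnit

theorem Matrix.PosDef.inv_sqrt_mul_mul_inv_sqrt {D : Matrix n n 𝕜} (hD : D.PosDef) :
    (hD.posSemidef.sqrt)⁻¹ * D * (hD.posSemidef.sqrt)⁻¹ = 1 := by
  have hSS : hD.posSemidef.sqrt * hD.posSemidef.sqrt = D := by
    rw [hD.posSemidef.sqrt_eq_cfcSqrt, CFC.sqrt_mul_sqrt_self D hD.posSemidef.nonneg]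
  set S := hD.posSemidef.sqrt
  have hdet : IsUnit S.det := (isUnit_iff_isUnit_det S).mp hD.isUnit_sqrt
  have h : S⁻¹ * (S * S) * S⁻¹ = 1 := by
    rw [← mul_assoc, nonsing_inv_mul S hdet, one_mul, mul_nonsing_inv S hdet]
  rwa [hSS] at h

theorem constrainedValues_conjTranspose_mul_mul {T : Matrix n n 𝕜} (hT : IsUnit T)
    (A D : Matrix n n 𝕜) (c : ℝ) :
    constrainedValues (Tᴴ * A * T) (Tᴴ * D * T) c = constrainedValues A D c := by
  simp only [constrainedValues, dotProduct_conjTranspose_mul_mul_mulVec]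
  ext x
  constructor
  · rintro ⟨w, hw, rfl⟩
    exact ⟨T *ᵥ w, hw, rfl⟩
  · rintro ⟨u, hu, rfl⟩
    obtain ⟨w, rfl⟩ := mulVec_surjective_iff_isUnit.mpr hT u
    exact ⟨w, hu, rfl⟩

namespace Matrix.IsHermitian

variable {M : Matrix n n 𝕜}

theorem re_dotProduct_mulVec_le (hM : M.IsHermitian) {r : ℝ} (hr : ∀ i, hM.eigenvalues i ≤ r)
    (v : n → 𝕜) : RCLike.re (star v ⬝ᵥ M *ᵥ v) ≤ r * RCLike.re (star v ⬝ᵥ v) := by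
  have hle : M ≤ algebraMap ℝ _ r := le_algebraMap_of_spectrum_le (by
    rw [hM.spectrum_real_eq_range_eigenvalues]
    rintro _ ⟨i, rfl⟩
    exact hr i) hM.isSelfAdjoint
  simpa [sub_mulVec, Algebra.algebraMap_eq_smul_one, smul_mulVec, RCLike.smul_re] using
    (le_iff.mp hle).re_dotProduct_nonneg v

variable [Nonempty n]

noncomputable def maxEigenvalue (hM : M.IsHermitian) : ℝ :=
  univ.sup' univ_nonempty hM.eigenvalues

theorem exists_eigenvalues_eq_maxEigenvalue (hM : M.IsHermitian) :
    ∃ i, hM.eigenvalues i = hM.maxEigenvalue := by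
  obtain ⟨i, -, hi⟩ := exists_mem_eq_sup' univ_nonempty hM.eigenvalues
  exact ⟨i, hi.symm⟩

theorem re_dotProduct_mulVec_le_maxEigenvalue (hM : M.IsHermitian) (v : n → 𝕜) :
    RCLike.re (star v ⬝ᵥ M *ᵥ v) ≤ hM.maxEigenvalue * RCLike.re (star v ⬝ᵥ v) :=
  hM.re_dotProduct_mulVec_le (fun i => le_sup' hM.eigenvalues (mem_univ i)) v

theorem isLeast_constrainedValues_one (hM : M.IsHermitian) (hpos : 0 < hM.maxEigenvalue)
    {c : ℝ} (hc : 0 < c) : IsLeast (constrainedValues M 1 c) (c / hM.maxEigenvalue) := by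
  constructor
  · obtain ⟨i, hi⟩ := hM.exists_eigenvalues_eq_maxEigenvalue
    set v : n → 𝕜 := ⇑(hM.eigenvectorBasis i)
    have hvv : RCLike.re (star v ⬝ᵥ v) = 1 := by
      rw [dotProduct_comm, ← EuclideanSpace.inner_eq_star_dotProduct, inner_self_eq_norm_sq,
        hM.eigenvectorBasis.orthonormal.1 i, one_pow]
    have hMv : RCLike.re (star v ⬝ᵥ M *ᵥ v) = hM.maxEigenvalue :=
      hi ▸ (hM.eigenvalues_eq i).symm
    have ht : √(c / hM.maxEigenvalue) ^ 2 = c / hM.maxEigenvalue := Real.sq_sqrt (by positivity)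
    refine ⟨√(c / hM.maxEigenvalue) • v, ?_, ?_⟩
    · rw [re_dotProduct_mulVec_real_smul, ht, hMv, div_mul_cancel₀ _ hpos.ne']
    · rw [re_dotProduct_mulVec_real_smul, ht, one_mulVec, hvv, mul_one]
  · rintro x ⟨w, hw, rfl⟩
    rw [one_mulVec, div_le_iff₀ hpos]
    linarith [hM.re_dotProduct_mulVec_le_maxEigenvalue w]

end Matrix.IsHermitian

theorem lambdaMax_eq_maxEigenvalue {R : ℕ} [NeZero R] {M : Matrix (Fin R) (Fin R) ℂ}
    (hM : M.IsHermitian) : lambdaMax M = hM.maxEigenvalue := by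
  refine IsGreatest.csSup_eq ⟨?_, ?_⟩
  · obtain ⟨i, hi⟩ := hM.exists_eigenvalues_eq_maxEigenvalue
    refine ⟨hM.eigenvectorBasis i, ?_, ?_⟩
    · simpa using hM.eigenvectorBasis.orthonormal.ne_zero i
    · rw [hM.mulVec_eigenvectorBasis, hi, RCLike.real_smul_eq_coe_smul (K := ℂ)]
      rfl
  · rintro x ⟨v, hv, hMv⟩
    have hvv : 0 < (star v ⬝ᵥ v).re := (RCLike.pos_iff.mp (dotProduct_star_self_pos_iff.mpr hv)).1
    have := hM.re_dotProduct_mulVec_le_maxEigenvalue v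
    rw [hMv, dotProduct_smul, smul_eq_mul] at this
    simp only [RCLike.re_to_complex, Complex.re_ofReal_mul] at this
    exact le_of_mul_le_mul_right this hvv

theorem stmt1 {R : ℕ} (hR : 1 ≤ R)
    (D A : Matrix (Fin R) (Fin R) ℂ)
    (hD : D.PosDef) (hA : A.IsHermitian) (c : ℝ) (hc : 0 < c)
    (hlam : 0 < lambdaMax ((hD.posSemidef.sqrt)⁻¹ * A * (hD.posSemidef.sqrt)⁻¹)) :
    IsLeast {v : ℝ | ∃ w : Fin R → ℂ,
        c ≤ (star w ⬝ᵥ A.mulVec w).re ∧ v = (star w ⬝ᵥ D.mulVec w).re}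
      (c / lambdaMax ((hD.posSemidef.sqrt)⁻¹ * A * (hD.posSemidef.sqrt)⁻¹)) := by
  have : NeZero R := ⟨by omega⟩
  have hT : (hD.posSemidef.sqrt)⁻¹ᴴ = (hD.posSemidef.sqrt)⁻¹ := by
    rw [conjTranspose_nonsing_inv, hD.posSemidef.isHermitian_sqrt.eq]
  have hM : ((hD.posSemidef.sqrt)⁻¹ * A * (hD.posSemidef.sqrt)⁻¹).IsHermitian := by
    simpa only [hT] using isHermitian_conjTranspose_mul_mul (hD.posSemidef.sqrt)⁻¹ hA
  rw [lambdaMax_eq_maxEigenvalue hM] at hlam ⊢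
  change IsLeast (constrainedValues A D c) _
  rw [← constrainedValues_conjTranspose_mul_mul (isUnit_nonsing_inv_iff.mpr hD.isUnit_sqrt), hT,
    hD.inv_sqrt_mul_mul_inv_sqrt]
  exact hM.isLeast_constrainedValues_one hlam hc
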